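/- Let n ≥ 1 and let A ⊆ ℝ^n be a set with the following two properties for every index i ∈ {1, …, n}: (i) A is symmetric with respect to the hyperplane {x_i = 0}, i.e. if x ∈ A then the point obtained from x by replacing the i-th coordinate x_i with −x_i also belongs to A; (ii) A is convex in the x_i-direction, i.e. if x, x' ∈ A agree in all coordinates except possibly the i-th, then t·x + (1−t)·x' ∈ A for all t ∈ [0,1]. Then for every x ∈ A and every t ∈ [0,1], one has t·x ∈ A; in particular, if A is nonempty then 0 ∈ A and A is star-shaped at 0 (StarConvex with center 0). -/
import Mathlib


/-- A set that is symmetric with respect to every coordinate hyperplane and convex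
in every coordinate direction is star-shaped at the origin. -/
theorem stmt_13 {n : ℕ} (hn : 1 ≤ n) (A : Set (Fin n → ℝ))
    (hsym : ∀ i : Fin n, ∀ x ∈ A, Function.update x i (-(x i)) ∈ A)
    (hconv : ∀ i : Fin n, ∀ x ∈ A, ∀ x' ∈ A, (∀ j : Fin n, j ≠ i → x j = x' j) →
      ∀ t ∈ Set.Icc (0 : ℝ) 1, t • x + (1 - t) • x' ∈ A) :
    (∀ x ∈ A, ∀ t ∈ Set.Icc (0 : ℝ) 1, t • x ∈ A) ∧
    (A.Nonempty → (0 : Fin n → ℝ) ∈ A ∧ StarConvex ℝ (0 : Fin n → ℝ) A) := by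
  -- one-step lemma: we can scale a single coordinate by t ∈ [0,1]
  have step : ∀ x ∈ A, ∀ i : Fin n, ∀ t ∈ Set.Icc (0 : ℝ) 1,
      Function.update x i (t * x i) ∈ A := by
    intro x hx i t ht
    have hx' := hsym i x hx
    have h := hconv i x hx _ hx'
      (fun j hj => by simp [Function.update_of_ne hj]) ((1 + t) / 2)
      ⟨by linarith [ht.1], by linarith [ht.2]⟩
    convert h using 1
    funext j
    by_cases hji : j = i
    · subst hji
      simp only [Pi.add_apply, Pi.smul_apply, Function.update_self, smul_eq_mul]
      ring
    · simp only [Pi.add_apply, Pi.smul_apply, Function.update_of_ne hji, smul_eq_mul]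
      ring
  have main : ∀ x ∈ A, ∀ t ∈ Set.Icc (0 : ℝ) 1, t • x ∈ A := by
    intro x hx t ht
    have key : ∀ m ≤ n, (fun j : Fin n => if (j : ℕ) < m then t * x j else x j) ∈ A := by
      intro m hm
      induction m with
      | zero => simpa using hx
      | succ k ih =>
        have hk : k < n := hm
        have hkA := ih (le_of_lt hk)
        have h2 := step _ hkA ⟨k, hk⟩ t ht
        convert h2 using 1
        funext j
        by_cases hji : j = (⟨k, hk⟩ : Fin n)
        · subst hji
          rw [Function.update_self]
          simp
        · have : (j : ℕ) ≠ k := fun h => hji (Fin.ext h)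
          rw [Function.update_of_ne hji]
          rcases Nat.lt_or_ge (j : ℕ) k with h | h
          · rw [if_pos h, if_pos (Nat.lt_succ_of_lt h)]
          · rw [if_neg (Nat.not_lt.mpr h), if_neg (by omega)]
    have := key n le_rfl
    convert this using 1
    funext j
    simp [j.isLt]
  refine ⟨main, fun ⟨x, hx⟩ => ?_⟩
  have h0 : (0 : Fin n → ℝ) ∈ A := by
    have := main x hx 0 ⟨le_refl 0, zero_le_one⟩
    simpa using this
  refine ⟨h0, ?_⟩
  intro y hy a b ha hb hab
  have := main y hy b ⟨hb, by linarith⟩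
  simpa using this
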